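/- Let k be a field of characteristic 0, let Vir = k[t,t⁻¹]∂ ⊕ k·z be the Virasoro algebra with bracket [f∂ + c₁z, g∂ + c₂z] = (fg'−f'g)∂ + Res₀(f'g''−f''g')·z, and let f ∈ k[t,t⁻¹] be nonzero. Suppose 𝔨 is a Lie subalgebra of Vir such that for every p ∈ ℤ there exists λ_p ∈ k with f·tᵖ·∂ + λ_p·z ∈ 𝔨. Then z belongs to the derived subalgebra [𝔨, 𝔨]. -/

import Mathlib

/-- Formal derivative on Laurent polynomials, sending `tⁿ` to `n·tⁿ⁻¹`. -/
noncomputable def lderiv {k : Type*} [CommRing k] (f : LaurentPolynomial k) : LaurentPolynomial k :=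
  AddMonoidAlgebra.ofCoeff (Finsupp.sum f.coeff fun n a => Finsupp.single (n - 1) ((n : k) * a))

/-- `Res₀(f)`: the coefficient of `t⁻¹` in a Laurent polynomial. -/
noncomputable def lres {k : Type*} [CommRing k] (f : LaurentPolynomial k) : k := f.coeff (-1)

/-- The Virasoro bracket on `Vir = k[t,t⁻¹]∂ ⊕ k·z`, identified with `k[t,t⁻¹] × k`:
`[(f,c₁),(g,c₂)] = (fg' − f'g, Res₀(f'g'' − f''g'))`. -/
noncomputable def virBracket {k : Type*} [CommRing k]
    (u v : LaurentPolynomial k × k) : LaurentPolynomial k × k :=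
  (u.1 * lderiv v.1 - lderiv u.1 * v.1,
    lres (lderiv u.1 * lderiv (lderiv v.1) - lderiv (lderiv u.1) * lderiv v.1))

/-!
The bracket of `f tᵖ ∂` and `f t^(s-p) ∂` has `∂`-part `(s - 2p) f² t^(s-1)`, linear in `p`, and
central part a cubic polynomial in `p` whose leading coefficient is `2 Res₀(f² t^(s-3))`. The
third finite difference in `p` of these brackets is therefore `12 Res₀(f² t^(s-3)) z`, and since
`f² ≠ 0`, `s` can be chosen to make this residue nonzero.
-/

open LaurentPolynomial

section Derivative

variable {k : Type*} [CommRing k]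

lemma lderiv_add (x y : LaurentPolynomial k) : lderiv (x + y) = lderiv x + lderiv y := by
  unfold lderiv
  rw [AddMonoidAlgebra.coeff_add,
    Finsupp.sum_add_index (by simp) (by intros; simp [mul_add, Finsupp.single_add])]
  rfl

lemma lderiv_smul (c : k) (x : LaurentPolynomial k) : lderiv (c • x) = c • lderiv x := by
  unfold lderiv
  rw [AddMonoidAlgebra.coeff_smul, ← AddMonoidAlgebra.ofCoeff_smul,
    Finsupp.sum_smul_index (by simp), Finsupp.smul_sum]
  refine congrArg _ (Finsupp.sum_congr fun n _ => ?_)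
  rw [Finsupp.smul_single, smul_eq_mul, mul_left_comm]

lemma lderiv_C_mul_T (a : k) (n : ℤ) : lderiv (C a * T n) = (n : k) • (C a * T (n - 1)) := by
  rw [← single_eq_C_mul_T, ← single_eq_C_mul_T, AddMonoidAlgebra.smul_single, smul_eq_mul]
  unfold lderiv
  rw [AddMonoidAlgebra.coeff_single, Finsupp.sum_single_index (by simp)]
  rfl

lemma lderiv_mul (x y : LaurentPolynomial k) : lderiv (x * y) = lderiv x * y + x * lderiv y := by
  have C_mul_T_mul (a b : k) (m n : ℤ) : C a * T m * (C b * T n) = C (a * b) * T (m + n) := by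
    rw [T_add, map_mul]; ring
  induction x using LaurentPolynomial.induction_on' with
  | add p q hp hq => rw [add_mul, lderiv_add, hp, hq, lderiv_add]; ring
  | C_mul_T m a =>
    induction y using LaurentPolynomial.induction_on' with
    | add p q hp hq => rw [mul_add, lderiv_add, hp, hq, lderiv_add]; ring
    | C_mul_T n b =>
      rw [C_mul_T_mul, lderiv_C_mul_T, lderiv_C_mul_T, lderiv_C_mul_T, smul_mul_assoc,
        mul_smul_comm, C_mul_T_mul, C_mul_T_mul, sub_add_eq_add_sub, add_sub_assoc, ← add_smul]
      push_cast
      ring_nf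

lemma lderiv_mul_T (x : LaurentPolynomial k) (n : ℤ) :
    lderiv (x * T n) = lderiv x * T n + (n : k) • (x * T (n - 1)) := by
  rw [lderiv_mul, ← mul_smul_comm]
  simpa using congrArg (x * ·) (lderiv_C_mul_T (1 : k) n)

lemma lderiv_lderiv_mul_T (x : LaurentPolynomial k) (n : ℤ) :
    lderiv (lderiv (x * T n)) = lderiv (lderiv x) * T n + (2 * (n : k)) • (lderiv x * T (n - 1))
      + ((n : k) * (n - 1)) • (x * T (n - 2)) := by
  rw [lderiv_mul_T, lderiv_add, lderiv_mul_T, lderiv_smul, lderiv_mul_T, sub_sub,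
    one_add_one_eq_two]
  push_cast
  module

end Derivative

section Residue

variable {k : Type*} [CommRing k]

lemma lres_add (x y : LaurentPolynomial k) : lres (x + y) = lres x + lres y := by
  simp [lres]

lemma lres_sub (x y : LaurentPolynomial k) : lres (x - y) = lres x - lres y := by
  simp [lres]

lemma lres_smul (c : k) (x : LaurentPolynomial k) : lres (c • x) = c * lres x := by
  simp [lres]

lemma lres_lderiv (x : LaurentPolynomial k) : lres (lderiv x) = 0 := by
  unfold lres lderiv
  rw [AddMonoidAlgebra.coeff_ofCoeff, Finsupp.sum_apply]
  refine Finset.sum_eq_zero fun n _ => ?_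
  dsimp only
  rw [Finsupp.single_apply]
  split_ifs with hn
  · simp [show n = 0 by omega]
  · rfl

lemma lres_mul_T (x : LaurentPolynomial k) (r : ℤ) : lres (x * T r) = x.coeff (-1 - r) := by
  rw [lres, T, AddMonoidAlgebra.coeff_mul_single_apply, mul_one, sub_eq_add_neg]

lemma exists_lres_mul_T_ne_zero {x : LaurentPolynomial k} (hx : x ≠ 0) :
    ∃ r : ℤ, lres (x * T r) ≠ 0 := by
  obtain ⟨m, hm⟩ := Finsupp.ne_iff.mp (mt AddMonoidAlgebra.coeff_eq_zero.mp hx)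
  exact ⟨-1 - m, by rwa [lres_mul_T, sub_sub_cancel]⟩

/-- Integration by parts: `Res₀(x y') = -Res₀(x' y)`, since `Res₀((xy)') = 0`. -/
lemma lres_mul_lderiv_sub (x y : LaurentPolynomial k) :
    lres (x * lderiv y - lderiv x * y) = 2 * lres (x * lderiv y) := by
  have h := lres_lderiv (x * y)
  rw [lderiv_mul, lres_add] at h
  rw [lres_sub]
  linear_combination -h

end Residue

section Bracket

variable {k : Type*} [CommRing k]

lemma mul_T_mul_mul_T (x y : LaurentPolynomial k) (a b : ℤ) :
    x * T a * (y * T b) = x * y * T (a + b) := by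
  rw [T_add]; ring

lemma virBracket_mul_T_fst (f : LaurentPolynomial k) (p q : ℤ) (lam mu : k) :
    (virBracket (f * T p, lam) (f * T q, mu)).1 = ((q : k) - p) • (f * f * T (p + q - 1)) := by
  simp only [virBracket, lderiv_mul_T, mul_add, add_mul, mul_smul_comm, smul_mul_assoc,
    mul_T_mul_mul_T, mul_comm (lderiv f) f, show p + (q - 1) = p + q - 1 by ring,
    show p - 1 + q = p + q - 1 by ring]
  module

lemma virBracket_mul_T_snd (f : LaurentPolynomial k) (p q : ℤ) (lam mu : k) :
    (virBracket (f * T p, lam) (f * T q, mu)).2 =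
      2 * (lres (lderiv f * lderiv (lderiv f) * T (p + q))
        + 2 * q * lres (lderiv f * lderiv f * T (p + q - 1))
        + q * (q - 1) * lres (lderiv f * f * T (p + q - 2))
        + p * lres (f * lderiv (lderiv f) * T (p + q - 1))
        + 2 * p * q * lres (f * lderiv f * T (p + q - 2))
        + p * q * (q - 1) * lres (f * f * T (p + q - 3))) := by
  rw [virBracket, lres_mul_lderiv_sub, lderiv_mul_T f p, lderiv_lderiv_mul_T f q]
  simp only [mul_add, add_mul, smul_mul_assoc, mul_smul_comm, mul_T_mul_mul_T, lres_add, lres_smul,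
    show p + (q - 1) = p + q - 1 by ring, show p + (q - 2) = p + q - 2 by ring,
    show p - 1 + q = p + q - 1 by ring, show p - 1 + (q - 1) = p + q - 2 by ring,
    show p - 1 + (q - 2) = p + q - 3 by ring]
  ring

lemma virBracket_third_difference (f : LaurentPolynomial k) (s : ℤ) (lam : ℤ → k)
    (B : ℤ → LaurentPolynomial k × k)
    (hB : ∀ p, B p = virBracket (f * T p, lam p) (f * T (s - p), lam (s - p))) :
    B 3 - (3 : k) • B 2 + (3 : k) • B 1 - B 0 = (0, 12 * lres (f * f * T (s - 3))) := by
  simp only [hB, Prod.ext_iff, Prod.fst_sub, Prod.fst_add, Prod.smul_fst, Prod.snd_sub,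
    Prod.snd_add, Prod.smul_snd, smul_eq_mul, virBracket_mul_T_fst, virBracket_mul_T_snd,
    add_sub_cancel]
  constructor
  · push_cast
    module
  · push_cast
    ring

end Bracket

theorem vir_z_mem_derived_general {k : Type*} [Field k] [CharZero k]
    (f : LaurentPolynomial k) (hf : f ≠ 0)
    (𝔨 : Submodule k (LaurentPolynomial k × k))
    (h : ∀ p : ℤ, ∃ lam : k, (f * LaurentPolynomial.T p, lam) ∈ 𝔨) :
    ((0 : LaurentPolynomial k), (1 : k)) ∈
      Submodule.span k {w : LaurentPolynomial k × k |
        ∃ u ∈ 𝔨, ∃ v ∈ 𝔨, w = virBracket u v} := by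
  obtain ⟨r, hr⟩ := exists_lres_mul_T_ne_zero (mul_ne_zero hf hf)
  choose lam hlam using h
  set B : ℤ → LaurentPolynomial k × k :=
    fun p ↦ virBracket (f * T p, lam p) (f * T (r + 3 - p), lam (r + 3 - p))
  have hB (p : ℤ) : B p ∈ Submodule.span k {w | ∃ u ∈ 𝔨, ∃ v ∈ 𝔨, w = virBracket u v} :=
    Submodule.subset_span ⟨_, hlam p, _, hlam (r + 3 - p), rfl⟩
  have hdiff := virBracket_third_difference f (r + 3) lam B fun _ ↦ rfl
  rw [add_sub_cancel_right] at hdiff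
  have hz : ((0 : LaurentPolynomial k), (1 : k)) =
      (12 * lres (f * f * T r))⁻¹ • (B 3 - (3 : k) • B 2 + (3 : k) • B 1 - B 0) := by
    rw [hdiff, Prod.smul_mk, smul_zero, smul_eq_mul, inv_mul_cancel₀ (mul_ne_zero (by norm_num) hr)]
  rw [hz]
  exact Submodule.smul_mem _ _ <|
    sub_mem (add_mem (sub_mem (hB 3) (Submodule.smul_mem _ _ (hB 2)))
      (Submodule.smul_mem _ _ (hB 1))) (hB 0)

/-- Let `f ∈ k[t,t⁻¹]` be nonzero and let `𝔨` be a Lie subalgebra of the Virasoro algebra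
such that for every `p ∈ ℤ` there is `λ_p ∈ k` with `f·tᵖ·∂ + λ_p·z ∈ 𝔨`.  Then the central
element `z = (0,1)` belongs to the derived subalgebra `[𝔨,𝔨]` (the span of brackets of pairs
of elements of `𝔨`). -/
theorem vir_z_mem_derived {k : Type*} [Field k] [CharZero k]
    (f : LaurentPolynomial k) (hf : f ≠ 0)
    (𝔨 : Submodule k (LaurentPolynomial k × k))
    (hLie : ∀ u ∈ 𝔨, ∀ v ∈ 𝔨, virBracket u v ∈ 𝔨)
    (h : ∀ p : ℤ, ∃ lam : k, (f * LaurentPolynomial.T p, lam) ∈ 𝔨) :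
    ((0 : LaurentPolynomial k), (1 : k)) ∈
      Submodule.span k {w : LaurentPolynomial k × k |
        ∃ u ∈ 𝔨, ∃ v ∈ 𝔨, w = virBracket u v} :=
  vir_z_mem_derived_general f hf 𝔨 h
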